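/- Let G be a group whose center Z(G) is infinite cyclic, and let H ≤ G be a subgroup isomorphic to ℤ × ℤ such that H ∩ Z(G) is nontrivial. Then the set {ψ ∈ Aut(H) : there exists α ∈ Aut(G) with α(H) = H and α(h) = ψ(h) for all h ∈ H} is a subgroup of Aut(H) which is virtually cyclic (it contains a cyclic subgroup of finite index). -/

import Mathlib

open Multiplicative

abbrev PP := Multiplicative ℤ × Multiplicative ℤ

namespace IndAux

def m11 (φ : MulAut PP) : ℤ := toAdd (φ (ofAdd 1, 1)).1
def m21 (φ : MulAut PP) : ℤ := toAdd (φ (ofAdd 1, 1)).2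
def m12 (φ : MulAut PP) : ℤ := toAdd (φ (1, ofAdd 1)).1
def m22 (φ : MulAut PP) : ℤ := toAdd (φ (1, ofAdd 1)).2

lemma decomp (x : PP) : x = ((ofAdd 1, 1) : PP) ^ (toAdd x.1) * ((1, ofAdd 1) : PP) ^ (toAdd x.2) := by
  ext
  · simp [← ofAdd_zsmul]
  · simp [← ofAdd_zsmul]

lemma apply_fst (φ : MulAut PP) (x : PP) :
    toAdd (φ x).1 = m11 φ * toAdd x.1 + m12 φ * toAdd x.2 := by
  conv_lhs => rw [decomp x]
  rw [map_mul, map_zpow, map_zpow]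
  simp [m11, m12]
  ring

lemma apply_snd (φ : MulAut PP) (x : PP) :
    toAdd (φ x).2 = m21 φ * toAdd x.1 + m22 φ * toAdd x.2 := by
  conv_lhs => rw [decomp x]
  rw [map_mul, map_zpow, map_zpow]
  simp [m21, m22]
  ring


lemma m11_mul (φ ψ : MulAut PP) : m11 (φ * ψ) = m11 φ * m11 ψ + m12 φ * m21 ψ := by
  show toAdd (φ (ψ _)).1 = _
  rw [apply_fst]; rfl

lemma m21_mul (φ ψ : MulAut PP) : m21 (φ * ψ) = m21 φ * m11 ψ + m22 φ * m21 ψ := by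
  show toAdd (φ (ψ _)).2 = _
  rw [apply_snd]; rfl

lemma m12_mul (φ ψ : MulAut PP) : m12 (φ * ψ) = m11 φ * m12 ψ + m12 φ * m22 ψ := by
  show toAdd (φ (ψ _)).1 = _
  rw [apply_fst]; rfl

lemma m22_mul (φ ψ : MulAut PP) : m22 (φ * ψ) = m21 φ * m12 ψ + m22 φ * m22 ψ := by
  show toAdd (φ (ψ _)).2 = _
  rw [apply_snd]; rfl

def dd (φ : MulAut PP) : ℤ := m11 φ * m22 φ - m12 φ * m21 φ

lemma dd_mul (φ ψ : MulAut PP) : dd (φ * ψ) = dd φ * dd ψ := by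
  simp only [dd, m11_mul, m12_mul, m21_mul, m22_mul]; ring

lemma m11_one : m11 1 = 1 := rfl
lemma m12_one : m12 1 = 0 := rfl
lemma m21_one : m21 1 = 0 := rfl
lemma m22_one : m22 1 = 1 := rfl

lemma dd_one : dd 1 = 1 := rfl

lemma dd_unit (φ : MulAut PP) : dd φ = 1 ∨ dd φ = -1 := by
  have h : dd φ * dd φ⁻¹ = 1 := by
    rw [← dd_mul, mul_inv_cancel, dd_one]
  exact Int.isUnit_iff.mp (IsUnit.of_mul_eq_one _ h)

lemma eq_one_of_entries (φ : MulAut PP) (h11 : m11 φ = 1) (h12 : m12 φ = 0)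
    (h21 : m21 φ = 0) (h22 : m22 φ = 1) : φ = 1 := by
  have key : ∀ x : PP, φ x = x := by
    intro x
    have h1 := apply_fst φ x
    have h2 := apply_snd φ x
    rw [h11, h12] at h1
    rw [h21, h22] at h2
    have e1 : toAdd (φ x).1 = toAdd x.1 := by rw [h1]; ring
    have e2 : toAdd (φ x).2 = toAdd x.2 := by rw [h2]; ring
    exact Prod.ext (toAdd.injective e1) (toAdd.injective e2)
  exact DFunLike.ext _ _ key

lemma classify {p' q' x y z : ℤ} (hco : IsCoprime p' q')
    (h1 : x * p' + y * q' = 0) (h2 : z * p' - x * q' = 0) :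
    ∃ t, x = t * (p' * q') ∧ y = -(t * p' ^ 2) ∧ z = t * q' ^ 2 := by
  by_cases hq : q' = 0
  · subst hq
    have hp : IsUnit p' := (isCoprime_zero_right).mp hco
    have hp2 : p' ^ 2 = 1 := Int.isUnit_iff.mp hp |>.elim (fun h => by rw [h]; ring)
      (fun h => by rw [h]; ring)
    have hp0 : p' ≠ 0 := hp.ne_zero
    have hx : x = 0 := by
      have : x * p' = 0 := by linarith
      exact (mul_eq_zero.mp this).resolve_right hp0
    have hz : z = 0 := by
      have : z * p' = 0 := by rw [hx] at h2; linarith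
      exact (mul_eq_zero.mp this).resolve_right hp0
    exact ⟨-y, by simp [hx], by rw [hp2]; ring, by simp [hz]⟩
  · have hdvd : q' ∣ x := by
      have : q' ∣ x * p' := ⟨-y, by linarith⟩
      exact (hco.symm.dvd_of_dvd_mul_right this)
    obtain ⟨m, hm⟩ := hdvd
    have hy : y = -(m * p') := by
      have h0 : q' * (m * p' + y) = 0 := by rw [hm] at h1; ring_nf; linarith [h1]
      have := (mul_eq_zero.mp h0).resolve_left hq
      linarith
    by_cases hp : p' = 0
    · subst hp
      have hqu : IsUnit q' := (isCoprime_zero_left).mp hco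
      have hq2 : q' ^ 2 = 1 := Int.isUnit_iff.mp hqu |>.elim (fun h => by rw [h]; ring)
        (fun h => by rw [h]; ring)
      have hx : x = 0 := by
        have : x * q' = 0 := by linarith
        exact (mul_eq_zero.mp this).resolve_right hq
      have hm0 : m = 0 := by
        rw [hx] at hm
        exact (mul_eq_zero.mp hm.symm).resolve_left hq
      exact ⟨z, by simp [hx], by simp [hy, hm0], by rw [hq2]; ring⟩
    · have hdvd2 : p' ∣ m := by
        have hco2 : IsCoprime p' (q' * q') := hco.mul_right hco
        have : p' ∣ m * (q' * q') := ⟨z, by rw [hm] at h2; ring_nf; linarith [h2]⟩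
        exact hco2.dvd_of_dvd_mul_right this
      obtain ⟨t, ht⟩ := hdvd2
      refine ⟨t, by rw [hm, ht]; ring, by rw [hy, ht]; ring, ?_⟩
      have hzp : z * p' = t * q' ^ 2 * p' := by
        rw [hm, ht] at h2; ring_nf; ring_nf at h2; linarith
      exact mul_right_cancel₀ hp hzp

lemma value_eq {u v p' q' t x y z : ℤ} (hu : u * p' + v * q' = 1)
    (hx : x = t * (p' * q')) (hy : y = -(t * p' ^ 2)) (hz : z = t * q' ^ 2) :
    2 * u * v * x - u ^ 2 * y + v ^ 2 * z = t := by
  subst hx hy hz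
  linear_combination (t * (u * p' + v * q' + 1)) * hu


lemma entries_model (gz : ℤ) (hgz : gz ≠ 0) {p' q' : ℤ} (hco : IsCoprime p' q') (φ : MulAut PP)
    (hfix : φ (ofAdd (gz * p'), ofAdd (gz * q')) = (ofAdd (gz * p'), ofAdd (gz * q')))
    (hdet : dd φ = 1) :
    ∃ t, m11 φ = 1 + t * (p' * q') ∧ m12 φ = -(t * p' ^ 2) ∧ m21 φ = t * q' ^ 2 ∧
      m22 φ = 1 - t * (p' * q') := by
  have h1 := apply_fst φ (ofAdd (gz * p'), ofAdd (gz * q'))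
  have h2 := apply_snd φ (ofAdd (gz * p'), ofAdd (gz * q'))
  rw [hfix] at h1 h2
  simp only [toAdd_ofAdd] at h1 h2
  have h1' : (m11 φ - 1) * p' + m12 φ * q' = 0 := by
    have hh : gz * ((m11 φ - 1) * p' + m12 φ * q') = gz * 0 := by linear_combination -h1
    exact mul_left_cancel₀ hgz hh
  have h2' : m21 φ * p' + (m22 φ - 1) * q' = 0 := by
    have hh : gz * (m21 φ * p' + (m22 φ - 1) * q') = gz * 0 := by linear_combination -h2
    exact mul_left_cancel₀ hgz hh
  have hp'q' : ¬(p' = 0 ∧ q' = 0) := by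
    rintro ⟨hp0, hq0⟩
    subst hp0 hq0
    exact not_isUnit_zero (isCoprime_zero_left.mp hco)
  have hd0 : (m11 φ - 1) * (m22 φ - 1) - m12 φ * m21 φ = 0 := by
    have hdp : ((m11 φ - 1) * (m22 φ - 1) - m12 φ * m21 φ) * p' = 0 := by
      linear_combination (m22 φ - 1) * h1' - m12 φ * h2'
    have hdq : ((m11 φ - 1) * (m22 φ - 1) - m12 φ * m21 φ) * q' = 0 := by
      linear_combination (m11 φ - 1) * h2' - m21 φ * h1'
    rcases not_and_or.mp hp'q' with h | h
    · exact (mul_eq_zero.mp hdp).resolve_right h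
    · exact (mul_eq_zero.mp hdq).resolve_right h
  have hdet' : m11 φ * m22 φ - m12 φ * m21 φ = 1 := hdet
  have hw : m22 φ - 1 = -(m11 φ - 1) := by linear_combination hdet' - hd0
  have h2'' : m21 φ * p' - (m11 φ - 1) * q' = 0 := by linear_combination h2' - q' * hw
  obtain ⟨t, hx, hy, hz⟩ := classify hco h1' h2''
  exact ⟨t, by linarith, hy, hz, by linarith⟩

end IndAux


/-- Let `G` have infinite cyclic center and `H ≤ G` be isomorphic to `ℤ × ℤ` with
`H ∩ Z(G)` nontrivial. Then the automorphisms of `H` induced by automorphisms of `G`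
preserving `H` form a virtually cyclic subgroup of `Aut(H)`. -/
theorem induced_automorphisms_virtually_cyclic {G : Type*} [Group G]
    (hZ : Nonempty (↥(Subgroup.center G) ≃* Multiplicative ℤ))
    (H : Subgroup G)
    (hH : Nonempty (↥H ≃* Multiplicative ℤ × Multiplicative ℤ))
    (hmeet : H ⊓ Subgroup.center G ≠ ⊥) :
    ∃ S : Subgroup (MulAut ↥H),
      (∀ ψ : MulAut ↥H, ψ ∈ S ↔ ∃ α : MulAut G,
        (∀ x : G, x ∈ H ↔ α x ∈ H) ∧ ∀ h : ↥H, α h = (ψ h : G)) ∧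
      ∃ C : Subgroup ↥S, IsCyclic ↥C ∧ C.FiniteIndex := by
  classical
  obtain ⟨e⟩ := hH
  obtain ⟨fz⟩ := hZ
  let S : Subgroup (MulAut ↥H) :=
    { carrier := {ψ | ∃ α : MulAut G, (∀ x : G, x ∈ H ↔ α x ∈ H) ∧ ∀ h : ↥H, α h = (ψ h : G)}
      one_mem' := ⟨1, fun _ => Iff.rfl, fun _ => rfl⟩
      mul_mem' := by
        rintro ψ₁ ψ₂ ⟨α₁, hα₁, hα₁'⟩ ⟨α₂, hα₂, hα₂'⟩
        refine ⟨α₁ * α₂, fun x => ?_, fun h => ?_⟩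
        · exact (hα₂ x).trans (hα₁ (α₂ x))
        · show α₁ (α₂ h) = ((ψ₁ * ψ₂) h : G)
          rw [hα₂' h, hα₁' (ψ₂ h)]
          rfl
      inv_mem' := by
        rintro ψ ⟨α, hα, hα'⟩
        refine ⟨α⁻¹, fun x => ?_, fun h => ?_⟩
        · have h0 : α (α⁻¹ x) = x := MulAut.apply_inv_self _ α x
          nth_rewrite 1 [← h0]
          exact (hα (α⁻¹ x)).symm
        · apply α.injective
          show α (α⁻¹ ↑h) = α ((ψ⁻¹ h : ↥H) : G)
          rw [MulAut.apply_inv_self, hα' (ψ⁻¹ h)]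
          show (h : G) = ((ψ (ψ⁻¹ h) : ↥H) : G)
          rw [MulAut.apply_inv_self] }
  -- the central element z
  let K₀ : Subgroup ↥H := Subgroup.comap H.subtype (Subgroup.center G)
  let jraw : ↥K₀ →* G := H.subtype.comp K₀.subtype
  have hjraw : Function.Injective jraw := H.subtype_injective.comp K₀.subtype_injective
  let j : ↥K₀ →* ↥(Subgroup.center G) := jraw.codRestrict _ (fun k => k.2)
  have hjinj : Function.Injective j := by
    intro x y hxy
    have h2 := congrArg Subtype.val hxy
    exact hjraw h2
  let j2 : ↥K₀ →* Multiplicative ℤ := fz.toMonoidHom.comp j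
  have hj2 : Function.Injective j2 := fz.injective.comp hjinj
  haveI : IsCyclic ↥(j2.range) := Subgroup.isCyclic _
  haveI hKcyc : IsCyclic ↥K₀ :=
    isCyclic_of_surjective (MonoidHom.ofInjective hj2).symm (MonoidHom.ofInjective hj2).symm.surjective
  obtain ⟨z₀, hz₀⟩ := IsCyclic.exists_generator (α := ↥K₀)
  set z : ↥H := (z₀ : ↥H) with hzdef
  have hzc : (z : G) ∈ Subgroup.center G := z₀.2
  obtain ⟨x, hx, hx1⟩ : ∃ x : G, x ∈ H ⊓ Subgroup.center G ∧ x ≠ 1 := by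
    by_contra hcon
    push_neg at hcon
    exact hmeet ((Subgroup.eq_bot_iff_forall _).mpr hcon)
  have hz1 : z ≠ 1 := by
    intro h
    have hz₀1 : z₀ = 1 := Subtype.ext h
    have hw : (⟨⟨x, hx.1⟩, hx.2⟩ : ↥K₀) ∈ Subgroup.zpowers z₀ := hz₀ _
    obtain ⟨n, hn⟩ := Subgroup.mem_zpowers_iff.mp hw
    rw [hz₀1, one_zpow] at hn
    exact hx1 (congrArg (fun t : ↥K₀ => ((t : ↥H) : G)) hn.symm)
  -- powers
  have hpowS : ∀ ψ : MulAut ↥H, ψ ∈ S → ∃ k : ℤ, ψ z = z ^ k := by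
    intro ψ hψ
    obtain ⟨α, hα, hα'⟩ := hψ
    have hcent : ((ψ z : ↥H) : G) ∈ Subgroup.center G := by
      rw [← hα' z]
      rw [Subgroup.mem_center_iff] at hzc ⊢
      intro g
      have h1 := hzc (α⁻¹ g)
      calc g * α ↑z = α (α⁻¹ g * ↑z) := by rw [map_mul, MulAut.apply_inv_self]
        _ = α (↑z * α⁻¹ g) := by rw [← h1]
        _ = α ↑z * g := by rw [map_mul, MulAut.apply_inv_self]
    have hmemK : ψ z ∈ K₀ := Subgroup.mem_comap.mpr hcent
    obtain ⟨k, hk⟩ := Subgroup.mem_zpowers_iff.mp (hz₀ ⟨ψ z, hmemK⟩)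
    refine ⟨k, ?_⟩
    have h3 := congrArg (fun t : ↥K₀ => (t : ↥H)) hk
    simpa using h3.symm
  have hne : ¬(toAdd (e z).1 = 0 ∧ toAdd (e z).2 = 0) := by
    rintro ⟨hh1, hh2⟩
    apply hz1
    apply e.injective
    rw [map_one]
    refine Prod.ext (toAdd.injective ?_) (toAdd.injective ?_)
    · simpa using hh1
    · simpa using hh2
  have hord : ∀ n : ℤ, z ^ n = (1 : ↥H) → n = 0 := by
    intro n hn
    have h1 : (e z) ^ n = 1 := by rw [← map_zpow, hn, map_one]
    have hp1 : n * toAdd (e z).1 = 0 := by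
      have h2 := congrArg (fun t : PP => toAdd t.1) h1
      simpa [toAdd_zpow] using h2
    have hq1 : n * toAdd (e z).2 = 0 := by
      have h2 := congrArg (fun t : PP => toAdd t.2) h1
      simpa [toAdd_zpow] using h2
    by_contra hn0
    exact hne ⟨(mul_eq_zero.mp hp1).resolve_left hn0, (mul_eq_zero.mp hq1).resolve_left hn0⟩
  have hzgen : ∀ ψ : MulAut ↥H, ψ ∈ S → ψ z = z ∨ ψ z = z⁻¹ := by
    intro ψ hψ
    obtain ⟨k, hk⟩ := hpowS ψ hψ
    obtain ⟨l, hl⟩ := hpowS ψ⁻¹ (S.inv_mem hψ)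
    have hzz : z ^ (k * l) = z := by
      calc z ^ (k * l) = (z ^ l) ^ k := by rw [mul_comm, zpow_mul]
        _ = (ψ⁻¹ z) ^ k := by rw [hl]
        _ = ψ⁻¹ (z ^ k) := by rw [map_zpow]
        _ = ψ⁻¹ (ψ z) := by rw [hk]
        _ = z := MulAut.inv_apply_self _ ψ z
    have hkl : k * l = 1 := by
      have h4 : z ^ (k * l - 1) = 1 := by
        rw [zpow_sub, hzz, zpow_one, mul_inv_cancel]
      have := hord _ h4
      omega
    rcases Int.isUnit_iff.mp (IsUnit.of_mul_eq_one (a := k) l hkl) with h | h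
    · left; rw [hk, h, zpow_one]
    · right; rw [hk, h, zpow_neg, zpow_one]
  refine ⟨S, fun ψ => Iff.rfl, ?_⟩
  let σ : MulAut ↥H ≃* MulAut PP := MulAut.congr e
  set a : PP := e z with hadef
  set p : ℤ := toAdd a.1 with hpdef
  set q : ℤ := toAdd a.2 with hqdef
  have hpq : ¬(p = 0 ∧ q = 0) := hne
  have hgcd0 : Int.gcd p q ≠ 0 := by
    intro h
    exact hpq (Int.gcd_eq_zero_iff.mp h)
  set gg : ℤ := (Int.gcd p q : ℤ) with hggdef
  have hgg : gg ≠ 0 := Int.natCast_ne_zero.mpr hgcd0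
  set p' : ℤ := p / gg with hp'def
  set q' : ℤ := q / gg with hq'def
  have hp' : p = gg * p' := (Int.mul_ediv_cancel' (Int.gcd_dvd_left p q)).symm
  have hq' : q = gg * q' := (Int.mul_ediv_cancel' (Int.gcd_dvd_right p q)).symm
  have hco : IsCoprime p' q' := by
    rw [Int.isCoprime_iff_gcd_eq_one]
    exact Int.gcd_div_gcd_div_gcd (Nat.pos_of_ne_zero hgcd0)
  obtain ⟨u, v, huv⟩ := id hco
  have haform : a = (ofAdd (gg * p'), ofAdd (gg * q')) := by
    refine Prod.ext (toAdd.injective ?_) (toAdd.injective ?_)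
    · simpa [mul_comm] using hp'
    · simpa [mul_comm] using hq'
  have hσa : ∀ χ : MulAut ↥H, σ χ a = e (χ z) := by
    intro χ
    have h0 : σ χ a = e (χ (e.symm (e z))) := rfl
    rw [h0, e.symm_apply_apply]
  have hSfix : ∀ ψ : ↥S, σ (ψ : MulAut ↥H) a = a ∨ σ (ψ : MulAut ↥H) a = a⁻¹ := by
    intro ψ
    rcases hzgen ψ ψ.2 with h | h
    · left; rw [hσa, h]
    · right; rw [hσa, h, map_inv]
  have hane : ¬(a⁻¹ = a) := by
    intro hcon
    apply hpq
    have h1 := congrArg (fun t : PP => toAdd t.1) hcon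
    have h2 := congrArg (fun t : PP => toAdd t.2) hcon
    simp only [Prod.fst_inv, Prod.snd_inv, toAdd_inv] at h1 h2
    constructor <;> omega
  have hσmul : ∀ ψ₁ ψ₂ : ↥S, σ ((ψ₁ * ψ₂ : ↥S) : MulAut ↥H)
      = σ (ψ₁ : MulAut ↥H) * σ (ψ₂ : MulAut ↥H) := by
    intro ψ₁ ψ₂
    rw [Subgroup.coe_mul, map_mul]
  have hm1 : ∀ ψ₁ ψ₂ : ↥S,
      (if σ ((ψ₁ * ψ₂ : ↥S) : MulAut ↥H) a = a then (1:ℤˣ) else -1)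
      = (if σ (ψ₁ : MulAut ↥H) a = a then (1:ℤˣ) else -1)
        * (if σ (ψ₂ : MulAut ↥H) a = a then (1:ℤˣ) else -1) := by
    intro ψ₁ ψ₂
    have happ : σ ((ψ₁ * ψ₂ : ↥S) : MulAut ↥H) a
        = σ (ψ₁ : MulAut ↥H) (σ (ψ₂ : MulAut ↥H) a) := by
      rw [hσmul]; rfl
    rcases hSfix ψ₁ with h1 | h1 <;> rcases hSfix ψ₂ with h2 | h2
    · rw [if_pos h1, if_pos h2, if_pos (by rw [happ, h2, h1]), one_mul]
    · rw [if_pos h1, if_neg (fun hc => hane (h2 ▸ hc)),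
        if_neg (fun hc => hane (by rw [happ, h2, map_inv, h1] at hc; exact hc)), one_mul]
    · rw [if_neg (fun hc => hane (h1 ▸ hc)), if_pos h2,
        if_neg (fun hc => hane (by rw [happ, h2, h1] at hc; exact hc)), mul_one]
    · rw [if_neg (fun hc => hane (h1 ▸ hc)), if_neg (fun hc => hane (h2 ▸ hc)),
        if_pos (by rw [happ, h2, map_inv, h1, inv_inv])]
      norm_num
  have hm2 : ∀ ψ₁ ψ₂ : ↥S,
      (if IndAux.dd (σ ((ψ₁ * ψ₂ : ↥S) : MulAut ↥H)) = 1 then (1:ℤˣ) else -1)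
      = (if IndAux.dd (σ (ψ₁ : MulAut ↥H)) = 1 then (1:ℤˣ) else -1)
        * (if IndAux.dd (σ (ψ₂ : MulAut ↥H)) = 1 then (1:ℤˣ) else -1) := by
    intro ψ₁ ψ₂
    rw [hσmul, IndAux.dd_mul]
    rcases IndAux.dd_unit (σ (ψ₁ : MulAut ↥H)) with hd1 | hd1 <;>
      rcases IndAux.dd_unit (σ (ψ₂ : MulAut ↥H)) with hd2 | hd2 <;>
      rw [hd1, hd2] <;> norm_num
  let F1 : ↥S →* ℤˣ :=
    MonoidHom.mk' (fun ψ => if σ (ψ : MulAut ↥H) a = a then (1:ℤˣ) else -1) hm1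
  let F2 : ↥S →* ℤˣ :=
    MonoidHom.mk' (fun ψ => if IndAux.dd (σ (ψ : MulAut ↥H)) = 1 then (1:ℤˣ) else -1) hm2
  let F : ↥S →* ℤˣ × ℤˣ := F1.prod F2
  refine ⟨F.ker, ?_, ?_⟩
  · -- IsCyclic
    have hunit : ((-1 : ℤˣ)) ≠ 1 := by decide
    have hker : ∀ ψ : ↥F.ker, σ ((ψ : ↥S) : MulAut ↥H) a = a
        ∧ IndAux.dd (σ ((ψ : ↥S) : MulAut ↥H)) = 1 := by
      intro ψ
      have h := ψ.2
      rw [MonoidHom.mem_ker] at h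
      have h1 : (if σ ((ψ : ↥S) : MulAut ↥H) a = a then (1:ℤˣ) else -1) = 1 :=
        congrArg Prod.fst h
      have h2 : (if IndAux.dd (σ ((ψ : ↥S) : MulAut ↥H)) = 1 then (1:ℤˣ) else -1) = 1 :=
        congrArg Prod.snd h
      constructor
      · by_contra hc
        rw [if_neg hc] at h1
        exact hunit h1
      · by_contra hc
        rw [if_neg hc] at h2
        exact hunit h2
    have hmodel : ∀ ψ : ↥F.ker, ∃ t,
        IndAux.m11 (σ ((ψ : ↥S) : MulAut ↥H)) = 1 + t * (p' * q') ∧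
        IndAux.m12 (σ ((ψ : ↥S) : MulAut ↥H)) = -(t * p' ^ 2) ∧
        IndAux.m21 (σ ((ψ : ↥S) : MulAut ↥H)) = t * q' ^ 2 ∧
        IndAux.m22 (σ ((ψ : ↥S) : MulAut ↥H)) = 1 - t * (p' * q') := by
      intro ψ
      refine IndAux.entries_model gg hgg hco _ ?_ (hker ψ).2
      rw [← haform]
      exact (hker ψ).1
    have hσmulK : ∀ ψ₁ ψ₂ : ↥F.ker, σ (((ψ₁ * ψ₂ : ↥F.ker) : ↥S) : MulAut ↥H)
        = σ ((ψ₁ : ↥S) : MulAut ↥H) * σ ((ψ₂ : ↥S) : MulAut ↥H) := by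
      intro ψ₁ ψ₂
      exact map_mul σ _ _
    let AA : ↥F.ker → ℤ := fun ψ =>
      2 * u * v * (IndAux.m11 (σ ((ψ : ↥S) : MulAut ↥H)) - 1)
        - u ^ 2 * IndAux.m12 (σ ((ψ : ↥S) : MulAut ↥H))
        + v ^ 2 * IndAux.m21 (σ ((ψ : ↥S) : MulAut ↥H))
    have hAadd : ∀ ψ₁ ψ₂ : ↥F.ker, AA (ψ₁ * ψ₂) = AA ψ₁ + AA ψ₂ := by
      intro ψ₁ ψ₂
      obtain ⟨t, ht1, ht2, ht3, ht4⟩ := hmodel ψ₁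
      obtain ⟨s, hs1, hs2, hs3, hs4⟩ := hmodel ψ₂
      simp only [AA]
      rw [hσmulK ψ₁ ψ₂, IndAux.m11_mul, IndAux.m12_mul, IndAux.m21_mul,
        ht1, ht2, ht3, ht4, hs1, hs2, hs3, hs4]
      ring
    let cF : ↥F.ker →* Multiplicative ℤ := MonoidHom.mk' (fun ψ => ofAdd (AA ψ))
      (fun ψ₁ ψ₂ => by
        show ofAdd (AA (ψ₁ * ψ₂)) = ofAdd (AA ψ₁) * ofAdd (AA ψ₂)
        rw [hAadd ψ₁ ψ₂, ofAdd_add])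
    have hcinj : Function.Injective cF := by
      apply (injective_iff_map_eq_one cF).mpr
      intro ψ hψ1
      obtain ⟨t, ht1, ht2, ht3, ht4⟩ := hmodel ψ
      have hAt : AA ψ = t := by
        have hx : IndAux.m11 (σ ((ψ : ↥S) : MulAut ↥H)) - 1 = t * (p' * q') := by
          rw [ht1]; ring
        exact IndAux.value_eq huv hx ht2 ht3
      have hA0 : AA ψ = 0 := by
        have h3 : ofAdd (AA ψ) = (1 : Multiplicative ℤ) := hψ1
        simpa using congrArg toAdd h3
      have ht0 : t = 0 := by rw [hAt] at hA0; exact hA0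
      have h11 : IndAux.m11 (σ ((ψ : ↥S) : MulAut ↥H)) = 1 := by rw [ht1, ht0]; ring
      have h12 : IndAux.m12 (σ ((ψ : ↥S) : MulAut ↥H)) = 0 := by rw [ht2, ht0]; ring
      have h21 : IndAux.m21 (σ ((ψ : ↥S) : MulAut ↥H)) = 0 := by rw [ht3, ht0]; ring
      have h22 : IndAux.m22 (σ ((ψ : ↥S) : MulAut ↥H)) = 1 := by rw [ht4, ht0]; ring
      have hσ1 : σ ((ψ : ↥S) : MulAut ↥H) = 1 := IndAux.eq_one_of_entries _ h11 h12 h21 h22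
      have hψS : ((ψ : ↥S) : MulAut ↥H) = 1 := by
        apply σ.injective
        rw [hσ1, map_one]
      exact Subtype.ext (Subtype.ext hψS)
    haveI : IsCyclic ↥(cF.range) := Subgroup.isCyclic _
    exact isCyclic_of_surjective (MonoidHom.ofInjective hcinj).symm
      (MonoidHom.ofInjective hcinj).symm.surjective
  · refine ⟨?_⟩
    rw [Subgroup.index_ker]
    exact Nat.card_pos.ne'
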